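/- Let H be a real Hilbert space with dim H ≥ 2 and Ω: H → ℝ ∪ {+∞} lower semicontinuous such that Ω(x+y) ≥ max(Ω(x), Ω(y)) for all orthogonal x, y ∈ H. Then Ω(x) = Ω(y) whenever ‖x‖ = ‖y‖. -/

import Mathlib

/-!
Write `y = cos φ • x + sin φ • u` with `u ⟂ x`, `‖u‖ = ‖x‖` (when `y` is a multiple of `x`, finding
such a `u` is where `2 ≤ dim H` enters), and let `γ t = cos t • x + sin t • u`. Then
`γ (s + θ) = cos θ • γ s + sin θ • γ' s` with `γ s ⟂ γ' s`, so the hypothesis gives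
`Ω (cos θ • γ s) ≤ Ω (γ (s + θ))`, and by homogeneity of this step the same holds after scaling.
Chaining `n` steps of angle `φ / n` gives `Ω (cos (φ / n) ^ n • x) ≤ Ω y`. Since
`cos (φ / n) ^ n → 1`, lower semicontinuity yields `Ω x ≤ Ω y`.
-/

open RealInnerProductSpace Filter Topology Real

theorem one_sub_nat_mul_le_cos_pow {x : ℝ} (hx : x ^ 2 ≤ 2) (n : ℕ) :
    1 - n * (x ^ 2 / 2) ≤ cos x ^ n := by
  calc 1 - n * (x ^ 2 / 2) = 1 + n * (-(x ^ 2 / 2)) := by ring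
    _ ≤ (1 + -(x ^ 2 / 2)) ^ n := one_add_mul_le_pow (by linarith [sq_nonneg x]) n
    _ ≤ cos x ^ n := by
      gcongr
      · linarith
      · linarith [one_sub_sq_div_two_le_cos (x := x)]

theorem tendsto_cos_div_pow_atTop (φ : ℝ) :
    Tendsto (fun n : ℕ => cos (φ / n) ^ n) atTop (𝓝 1) := by
  have h0 : Tendsto (fun n : ℕ => φ / n) atTop (𝓝 0) := tendsto_const_div_atTop_nhds_zero_nat φ
  have hsmall : ∀ᶠ n : ℕ in atTop, (φ / n) ^ 2 ≤ 1 :=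
    (h0.pow 2).eventually (ge_mem_nhds (by norm_num))
  have hlower : Tendsto (fun n : ℕ => 1 - φ / n * (φ / 2)) atTop (𝓝 1) := by
    simpa using (h0.mul_const (φ / 2)).const_sub 1
  refine tendsto_of_tendsto_of_tendsto_of_le_of_le' hlower tendsto_const_nhds ?_ ?_
  · filter_upwards [hsmall, eventually_ne_atTop 0] with n hn hn0
    calc 1 - φ / n * (φ / 2) = 1 - n * ((φ / n) ^ 2 / 2) := by field_simp
      _ ≤ cos (φ / n) ^ n := one_sub_nat_mul_le_cos_pow (by linarith) n
  · filter_upwards [hsmall] with n hn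
    exact pow_le_one₀ (by nlinarith [one_sub_sq_div_two_le_cos (x := φ / n)]) (cos_le_one _)

section

variable {H : Type*} [NormedAddCommGroup H] [InnerProductSpace ℝ H]

theorem exists_inner_eq_zero_norm_eq (hdim : 2 ≤ Module.rank ℝ H) (x : H) :
    ∃ u : H, ⟪x, u⟫ = 0 ∧ ‖u‖ = ‖x‖ := by
  have hne : (ℝ ∙ x)ᗮ ≠ ⊥ := by
    intro h
    have h1 : Module.rank ℝ H ≤ 1 := by
      rw [← rank_top ℝ H, ← Submodule.orthogonal_eq_bot_iff.mp h]
      simpa using rank_span_le (R := ℝ) {x}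
    exact absurd (hdim.trans h1) (by norm_num)
  obtain ⟨v, hv, hv0⟩ := Submodule.exists_mem_ne_zero_of_ne_bot hne
  refine ⟨(‖x‖ / ‖v‖) • v, ?_, ?_⟩
  · rw [real_inner_smul_right, Submodule.mem_orthogonal_singleton_iff_inner_right.mp hv, mul_zero]
  · rw [norm_smul, Real.norm_eq_abs, abs_div, abs_norm, abs_norm,
      div_mul_cancel₀ _ (norm_ne_zero_iff.mpr hv0)]

theorem exists_inner_eq_zero_norm_eq_smul_eq (hdim : 2 ≤ Module.rank ℝ H) {x w : H}
    (hxw : ⟪x, w⟫ = 0) : ∃ u : H, ⟪x, u⟫ = 0 ∧ ‖u‖ = ‖x‖ ∧ ‖w‖ • u = ‖x‖ • w := by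
  rcases eq_or_ne w 0 with rfl | hw
  · obtain ⟨u, hxu, hu⟩ := exists_inner_eq_zero_norm_eq hdim x
    exact ⟨u, hxu, hu, by simp⟩
  have hw' : ‖w‖ ≠ 0 := norm_ne_zero_iff.mpr hw
  refine ⟨(‖x‖ / ‖w‖) • w, ?_, ?_, ?_⟩
  · rw [real_inner_smul_right, hxw, mul_zero]
  · rw [norm_smul, Real.norm_eq_abs, abs_div, abs_norm, abs_norm, div_mul_cancel₀ _ hw']
  · rw [smul_smul, mul_div_cancel₀ _ hw']

noncomputable def planeRotate (x u : H) (t : ℝ) : H := cos t • x + sin t • u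

@[simp]
theorem planeRotate_zero (x u : H) : planeRotate x u 0 = x := by simp [planeRotate]

theorem planeRotate_add (x u : H) (s θ : ℝ) :
    planeRotate x u (s + θ) = cos θ • planeRotate x u s + sin θ • planeRotate u (-x) s := by
  simp only [planeRotate, cos_add, sin_add]
  module

theorem inner_planeRotate_planeRotate_neg {x u : H} (hxu : ⟪x, u⟫ = 0) (hu : ‖u‖ = ‖x‖)
    (s : ℝ) : ⟪planeRotate x u s, planeRotate u (-x) s⟫ = 0 := by
  have hux : ⟪u, x⟫ = 0 := by rw [real_inner_comm, hxu]
  simp only [planeRotate, inner_add_left, inner_add_right, real_inner_smul_left,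
    real_inner_smul_right, inner_neg_right, real_inner_self_eq_norm_sq, hxu, hux, hu]
  ring

theorem exists_planeRotate_eq (hdim : 2 ≤ Module.rank ℝ H) {x y : H}
    (hxy : ‖x‖ = ‖y‖) : ∃ (u : H) (φ : ℝ), ⟪x, u⟫ = 0 ∧ ‖u‖ = ‖x‖ ∧ planeRotate x u φ = y := by
  rcases eq_or_ne x 0 with rfl | hx
  · obtain rfl : y = 0 := norm_eq_zero.mp (by rw [← hxy, norm_zero])
    exact ⟨0, 0, by simp [planeRotate]⟩
  set r := ‖x‖
  have hr : 0 < r := norm_pos_iff.mpr hx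
  set c := ⟪x, y⟫ / r ^ 2
  set w := y - c • x
  have hxw : ⟪x, w⟫ = 0 := by
    simp only [w, c, inner_sub_right, real_inner_smul_right, real_inner_self_eq_norm_sq]
    field_simp
    ring
  have hw : ‖w‖ ^ 2 = r ^ 2 * (1 - c ^ 2) := by
    have hpyth := norm_add_sq_eq_norm_sq_add_norm_sq_real
      (show ⟪c • x, w⟫ = 0 by rw [real_inner_smul_left, hxw, mul_zero])
    rw [add_sub_cancel, ← hxy, norm_smul, Real.norm_eq_abs] at hpyth
    linear_combination -hpyth - r ^ 2 * abs_mul_abs_self c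
  have hc : c ^ 2 ≤ 1 := by
    have := (mul_nonneg_iff_of_pos_left (by positivity)).mp (hw ▸ sq_nonneg ‖w‖)
    linarith
  have hsin : sin (arccos c) * r = ‖w‖ := by
    rw [sin_arccos, ← sqrt_sq hr.le, ← sqrt_mul (sub_nonneg.mpr hc), mul_comm, ← hw,
      sqrt_sq (norm_nonneg w)]
  obtain ⟨u, hxu, hu, hwu⟩ := exists_inner_eq_zero_norm_eq_smul_eq hdim hxw
  refine ⟨u, arccos c, hxu, hu, ?_⟩
  rw [planeRotate, cos_arccos (by nlinarith) (by nlinarith), ← add_sub_cancel (c • x) y]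
  congr 1
  apply smul_right_injective H hr.ne'
  dsimp only
  rw [smul_smul, mul_comm, hsin, hwu]

section OrthogonallyMonotone

variable {α : Type*} [Preorder α] {Ω : H → α} {x u : H}

theorem le_apply_planeRotate_add
    (hΩ : ∀ x y : H, ⟪x, y⟫ = 0 → Ω x ≤ Ω (x + y)) (hxu : ⟪x, u⟫ = 0) (hu : ‖u‖ = ‖x‖)
    (a s θ : ℝ) :
    Ω ((a * cos θ) • planeRotate x u s) ≤ Ω (a • planeRotate x u (s + θ)) := by
  have horth : ⟪(a * cos θ) • planeRotate x u s, (a * sin θ) • planeRotate u (-x) s⟫ = 0 := by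
    rw [real_inner_smul_left, real_inner_smul_right, inner_planeRotate_planeRotate_neg hxu hu,
      mul_zero, mul_zero]
  calc Ω ((a * cos θ) • planeRotate x u s)
      ≤ Ω ((a * cos θ) • planeRotate x u s + (a * sin θ) • planeRotate u (-x) s) := hΩ _ _ horth
    _ = Ω (a • planeRotate x u (s + θ)) := by
      rw [planeRotate_add, smul_add, smul_smul, smul_smul]

theorem le_apply_planeRotate_nat_mul
    (hΩ : ∀ x y : H, ⟪x, y⟫ = 0 → Ω x ≤ Ω (x + y)) (hxu : ⟪x, u⟫ = 0) (hu : ‖u‖ = ‖x‖)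
    (θ : ℝ) (n : ℕ) (a : ℝ) :
    Ω ((a * cos θ ^ n) • x) ≤ Ω (a • planeRotate x u (n * θ)) := by
  induction n generalizing a with
  | zero => simp
  | succ n ih =>
    calc Ω ((a * cos θ ^ (n + 1)) • x) = Ω ((a * cos θ * cos θ ^ n) • x) := by ring_nf
      _ ≤ Ω ((a * cos θ) • planeRotate x u (n * θ)) := ih _
      _ ≤ Ω (a • planeRotate x u (n * θ + θ)) := le_apply_planeRotate_add hΩ hxu hu ..
      _ = Ω (a • planeRotate x u ((n + 1 : ℕ) * θ)) := by push_cast; ring_nf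

end OrthogonallyMonotone

theorem apply_le_apply_of_norm_eq {α : Type*} [LinearOrder α] (hdim : 2 ≤ Module.rank ℝ H)
    {Ω : H → α} (hlsc : LowerSemicontinuous Ω) (hΩ : ∀ x y : H, ⟪x, y⟫ = 0 → Ω x ≤ Ω (x + y))
    {x y : H} (hxy : ‖x‖ = ‖y‖) : Ω x ≤ Ω y := by
  obtain ⟨u, φ, hxu, hu, rfl⟩ := exists_planeRotate_eq hdim hxy
  have hlim : Tendsto (fun n : ℕ => cos (φ / n) ^ n • x) atTop (𝓝 x) := by
    simpa using (tendsto_cos_div_pow_atTop φ).smul_const x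
  refine (hlsc.isClosed_preimage _).mem_of_tendsto hlim ?_
  filter_upwards [eventually_ne_atTop 0] with n hn
  simpa [mul_div_cancel₀ φ (Nat.cast_ne_zero.mpr hn)] using
    le_apply_planeRotate_nat_mul hΩ hxu hu (φ / n) n 1

end

theorem stmt7_general {H : Type*} [NormedAddCommGroup H] [InnerProductSpace ℝ H]
    (hdim : 2 ≤ Module.rank ℝ H)
    (Ω : H → EReal) (hlsc : LowerSemicontinuous Ω)
    (hΩ : ∀ x y : H, ⟪x, y⟫ = 0 → Ω (x + y) ≥ max (Ω x) (Ω y)) :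
    ∀ x y : H, ‖x‖ = ‖y‖ → Ω x = Ω y := by
  have hmono : ∀ x y : H, ⟪x, y⟫ = 0 → Ω x ≤ Ω (x + y) :=
    fun x y h => (le_max_left _ _).trans (hΩ x y h)
  intro x y hxy
  exact le_antisymm (apply_le_apply_of_norm_eq hdim hlsc hmono hxy)
    (apply_le_apply_of_norm_eq hdim hlsc hmono hxy.symm)

theorem stmt7 {H : Type*} [NormedAddCommGroup H] [InnerProductSpace ℝ H] [CompleteSpace H]
    (hdim : 2 ≤ Module.rank ℝ H)
    (Ω : H → EReal) (hlsc : LowerSemicontinuous Ω)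
    (hΩ : ∀ x y : H, ⟪x, y⟫ = 0 → Ω (x + y) ≥ max (Ω x) (Ω y)) :
    ∀ x y : H, ‖x‖ = ‖y‖ → Ω x = Ω y :=
  stmt7_general hdim Ω hlsc hΩ
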